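/- Let u₁, u₂ ∈ ℝ³ be unit vectors and let v₁, v₂ ∈ ℝ³ be orthonormal vectors. Let O := (1/√2)((u₁·σ) ⊗ (v₁·σ) + (u₂·σ) ⊗ (v₂·σ)). Then √(1 + ‖u₁ × u₂‖) is an eigenvalue of O (it lies in the spectrum of O), and every eigenvalue μ of O satisfies |μ| ≤ √(1 + ‖u₁ × u₂‖). -/

import Mathlib

/-!
The product rule `(a·σ)(b·σ) = (a ⬝ b) 1 + i (a × b)·σ` gives `O² = 1 - M` with
`M = ((u₁ × u₂)·σ) ⊗ ((v₁ × v₂)·σ)`, and `M² = ‖u₁ × u₂‖² 1` because `v₁ × v₂` is a unit vector.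
Hence every eigenvalue `μ` of `O` has `1 - μ² = ±‖u₁ × u₂‖`, so `|μ|² ≤ 1 + ‖u₁ × u₂‖`.
Since `M` is traceless, `-‖u₁ × u₂‖` is an eigenvalue of `M`, so `1 + ‖u₁ × u₂‖` is an eigenvalue of
`O²`, i.e. the square of an eigenvalue of `O`. Conjugation by `1 ⊗ (v₁ × v₂)·σ` maps `O` to `-O`,
so the spectrum of `O` is symmetric and contains the positive square root.
-/

open Matrix Kronecker Complex

/-- The Pauli matrix σ₁. -/
noncomputable def σ1 : Matrix (Fin 2) (Fin 2) ℂ := !![0, 1; 1, 0]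

/-- The Pauli matrix σ₂. -/
noncomputable def σ2 : Matrix (Fin 2) (Fin 2) ℂ := !![0, -Complex.I; Complex.I, 0]

/-- The Pauli matrix σ₃. -/
noncomputable def σ3 : Matrix (Fin 2) (Fin 2) ℂ := !![1, 0; 0, -1]

/-- For `a ∈ ℝ³`, the observable `a·σ = a₁σ₁ + a₂σ₂ + a₃σ₃`. -/
noncomputable def pauliDot (a : Fin 3 → ℝ) : Matrix (Fin 2) (Fin 2) ℂ :=
  (a 0 : ℂ) • σ1 + (a 1 : ℂ) • σ2 + (a 2 : ℂ) • σ3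

/-- The Euclidean norm of a vector in `ℝ³`. -/
noncomputable def enorm3 (a : Fin 3 → ℝ) : ℝ := Real.sqrt (a ⬝ᵥ a)

namespace spectrum

section CommRing

variable {R A : Type*} [CommRing R] [Ring A] [Algebra R A]

lemma mem_one_sub_iff {a : A} {r : R} : r ∈ spectrum R (1 - a) ↔ 1 - r ∈ spectrum R a := by
  rw [mem_iff, mem_iff, ← IsUnit.neg_iff, map_sub, map_one, neg_sub, sub_right_comm]

lemma neg_mem_of_mul_eq_neg_mul {a u : A} (hu : u * u = 1) (hua : u * a = -(a * u)) {r : R}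
    (hr : r ∈ spectrum R a) : -r ∈ spectrum R a := by
  let v : Aˣ := ⟨u, u, hu, hu⟩
  have hconj : (v : A) * a * ↑v⁻¹ = -a := by
    change u * a * u = -a
    rw [hua, neg_mul, mul_assoc, hu, mul_one]
  rw [← units_conjugate (u := v), hconj, ← neg_eq]
  exact Set.neg_mem_neg.mpr hr

end CommRing

lemma eq_or_eq_neg_of_mul_self_eq {𝕜 A : Type*} [Field 𝕜] [Ring A] [Algebra 𝕜 A] [Nontrivial A]
    {a : A} {c : 𝕜} (ha : a * a = (c * c) • (1 : A)) {r : 𝕜} (hr : r ∈ spectrum 𝕜 a) :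
    r = c ∨ r = -c := by
  have hsq := pow_mem_pow a 2 hr
  rw [sq a, ha, ← Algebra.algebraMap_eq_smul_one, scalar_eq, Set.mem_singleton_iff] at hsq
  exact sq_eq_sq_iff_eq_or_eq_neg.mp (by rw [hsq, sq])

lemma mem_of_sq_mem_spectrum_sq {𝕜 A : Type*} [Field 𝕜] [IsAlgClosed 𝕜] [Ring A] [Algebra 𝕜 A]
    {a : A} (hsymm : ∀ μ ∈ spectrum 𝕜 a, -μ ∈ spectrum 𝕜 a) {r : 𝕜}
    (hr : r ^ 2 ∈ spectrum 𝕜 (a ^ 2)) : r ∈ spectrum 𝕜 a := by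
  rw [map_pow_of_pos a two_pos] at hr
  obtain ⟨μ, hμ, hμr⟩ := hr
  rcases sq_eq_sq_iff_eq_or_eq_neg.mp hμr with rfl | rfl
  · exact hμ
  · simpa using hsymm _ hμ

end spectrum

namespace Matrix

section Kronecker

variable {α l m n p : Type*} [Mul α] [HasDistribNeg α]

lemma neg_kronecker (A : Matrix l m α) (B : Matrix n p α) : (-A) ⊗ₖ B = -(A ⊗ₖ B) := by
  ext; simp

lemma kronecker_neg (A : Matrix l m α) (B : Matrix n p α) : A ⊗ₖ (-B) = -(A ⊗ₖ B) := by
  ext; simp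

end Kronecker

lemma neg_mem_spectrum_of_mul_self_eq_of_trace_eq_zero {K n : Type*} [Field K] [CharZero K]
    [Fintype n] [DecidableEq n] [Nonempty n] {M : Matrix n n K} {c : K}
    (hM : M * M = (c * c) • 1) (htr : M.trace = 0) : -c ∈ spectrum K M := by
  rw [spectrum.mem_iff, ← IsUnit.neg_iff, Algebra.algebraMap_eq_smul_one]
  intro hunit
  -- `N = c + M` satisfies `N² = 2c N`; if `N` is invertible then `N = 2c`, and the traces force
  -- `c = 0`, i.e. `N = 0`.
  set N : Matrix n n K := c • 1 + M
  have hN : N = -((-c) • 1 - M) := by simp only [N]; module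
  rw [← hN] at hunit
  have hNN : N * N = (2 * c) • 1 * N := by
    simp only [N, add_mul, mul_add, smul_mul_assoc, mul_smul_comm, one_mul, mul_one, hM]
    module
  have hN2c : N = (2 * c) • 1 := hunit.mul_right_cancel hNN
  have hc : c * Fintype.card n = 0 := by
    have htrN := congrArg Matrix.trace hN2c
    simp only [N, trace_add, trace_smul, trace_one, htr, smul_eq_mul] at htrN
    linear_combination -htrN
  have hc0 : c = 0 := by simpa using hc
  simp [hN2c, hc0] at hunit

end Matrix

lemma Complex.norm_le_sqrt_of_norm_one_sub_sq_le {μ : ℂ} {n : ℝ} (h : ‖1 - μ ^ 2‖ ≤ n) :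
    ‖μ‖ ≤ √(1 + n) := by
  refine Real.le_sqrt_of_sq_le ?_
  calc ‖μ‖ ^ 2 = ‖1 - (1 - μ ^ 2)‖ := by rw [sub_sub_cancel, norm_pow]
    _ ≤ ‖(1 : ℂ)‖ + ‖1 - μ ^ 2‖ := norm_sub_le _ _
    _ ≤ 1 + n := by rw [norm_one]; linarith

lemma enorm3_mul_self (a : Fin 3 → ℝ) : enorm3 a * enorm3 a = a ⬝ᵥ a :=
  Real.mul_self_sqrt (Finset.sum_nonneg fun i _ ↦ mul_self_nonneg (a i))

lemma cross_dot_cross_self_eq_one {R : Type*} [CommRing R] {a b : Fin 3 → R} (ha : a ⬝ᵥ a = 1)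
    (hb : b ⬝ᵥ b = 1) (hab : a ⬝ᵥ b = 0) : (a ⨯₃ b) ⬝ᵥ (a ⨯₃ b) = 1 := by
  rw [cross_dot_cross, ha, hb, dotProduct_comm b, hab]
  ring

lemma pauliDot_zero : pauliDot 0 = 0 := by
  simp [pauliDot]

lemma pauliDot_neg (a : Fin 3 → ℝ) : pauliDot (-a) = -pauliDot a := by
  simp only [pauliDot, Pi.neg_apply, ofReal_neg, neg_smul]
  abel

lemma trace_pauliDot (a : Fin 3 → ℝ) : (pauliDot a).trace = 0 := by
  simp [pauliDot, σ1, σ2, σ3, Matrix.trace, Fin.sum_univ_two]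

lemma pauliDot_mul_pauliDot (a b : Fin 3 → ℝ) :
    pauliDot a * pauliDot b = ((a ⬝ᵥ b : ℝ) : ℂ) • 1 + I • pauliDot (a ⨯₃ b) := by
  ext i j
  fin_cases i <;> fin_cases j <;>
    simp [pauliDot, σ1, σ2, σ3, Matrix.mul_apply, Fin.sum_univ_two, cross_apply,
      dotProduct, Fin.sum_univ_three] <;>
    ring_nf <;> simp [Complex.ext_iff] <;> ring

lemma pauliDot_mul_self (a : Fin 3 → ℝ) : pauliDot a * pauliDot a = ((a ⬝ᵥ a : ℝ) : ℂ) • 1 := by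
  rw [pauliDot_mul_pauliDot, cross_self, pauliDot_zero, smul_zero, add_zero]

lemma pauliDot_mul_pauliDot_of_dotProduct_eq_zero {a b : Fin 3 → ℝ} (h : a ⬝ᵥ b = 0) :
    pauliDot a * pauliDot b = I • pauliDot (a ⨯₃ b) := by
  rw [pauliDot_mul_pauliDot, h, ofReal_zero, zero_smul, zero_add]

lemma pauliDot_anticomm {a b : Fin 3 → ℝ} (h : a ⬝ᵥ b = 0) :
    pauliDot a * pauliDot b = -(pauliDot b * pauliDot a) := by
  rw [pauliDot_mul_pauliDot_of_dotProduct_eq_zero h,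
    pauliDot_mul_pauliDot_of_dotProduct_eq_zero (by rwa [dotProduct_comm]), ← cross_anticomm,
    pauliDot_neg, smul_neg]

lemma kronecker_pauliDot_mul_self (a b : Fin 3 → ℝ) :
    (pauliDot a ⊗ₖ pauliDot b) * (pauliDot a ⊗ₖ pauliDot b) =
      (((a ⬝ᵥ a) * (b ⬝ᵥ b) : ℝ) : ℂ) • 1 := by
  rw [← mul_kronecker_mul, pauliDot_mul_self, pauliDot_mul_self, smul_kronecker, kronecker_smul,
    one_kronecker_one, smul_smul, ofReal_mul]

lemma trace_kronecker_pauliDot (a b : Fin 3 → ℝ) : (pauliDot a ⊗ₖ pauliDot b).trace = 0 := by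
  rw [trace_kronecker, trace_pauliDot, zero_mul]

noncomputable def steeringOp (a₁ a₂ b₁ b₂ : Fin 3 → ℝ) :
    Matrix (Fin 2 × Fin 2) (Fin 2 × Fin 2) ℂ :=
  ((1 / √2 : ℝ) : ℂ) • (pauliDot a₁ ⊗ₖ pauliDot b₁ + pauliDot a₂ ⊗ₖ pauliDot b₂)

section steeringOp

variable {a₁ a₂ b₁ b₂ : Fin 3 → ℝ}

lemma steeringOp_sq (ha₁ : a₁ ⬝ᵥ a₁ = 1) (ha₂ : a₂ ⬝ᵥ a₂ = 1) (hb₁ : b₁ ⬝ᵥ b₁ = 1)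
    (hb₂ : b₂ ⬝ᵥ b₂ = 1) (hb₁₂ : b₁ ⬝ᵥ b₂ = 0) :
    steeringOp a₁ a₂ b₁ b₂ ^ 2 = 1 - pauliDot (a₁ ⨯₃ a₂) ⊗ₖ pauliDot (b₁ ⨯₃ b₂) := by
  -- The cross terms add up to `(2i (a₁ × a₂)·σ) ⊗ (i (b₁ × b₂)·σ)`.
  have hsum : (pauliDot a₁ ⊗ₖ pauliDot b₁ + pauliDot a₂ ⊗ₖ pauliDot b₂) ^ 2 =
      (2 : ℂ) • (1 - pauliDot (a₁ ⨯₃ a₂) ⊗ₖ pauliDot (b₁ ⨯₃ b₂)) := by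
    simp only [sq, add_mul, mul_add, ← mul_kronecker_mul, pauliDot_mul_self, ha₁, ha₂,
      hb₁, hb₂, pauliDot_mul_pauliDot a₁ a₂, pauliDot_mul_pauliDot a₂ a₁,
      pauliDot_mul_pauliDot_of_dotProduct_eq_zero hb₁₂,
      pauliDot_mul_pauliDot_of_dotProduct_eq_zero (dotProduct_comm b₁ b₂ ▸ hb₁₂),
      dotProduct_comm a₂ a₁, ← cross_anticomm a₁ a₂, ← cross_anticomm b₁ b₂, pauliDot_neg,
      add_kronecker, smul_kronecker, kronecker_smul, one_kronecker_one, smul_neg, neg_kronecker,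
      kronecker_neg, ofReal_one, one_smul]
    match_scalars <;> ring_nf
    simp [I_sq]
  have hs : ((1 / √2 : ℝ) : ℂ) ^ 2 * 2 = 1 := by
    rw [← ofReal_pow, div_pow, Real.sq_sqrt zero_le_two]
    norm_num
  rw [steeringOp, smul_pow, hsum, smul_smul, hs, one_smul]

lemma one_kronecker_pauliDot_mul_steeringOp {w : Fin 3 → ℝ} (hw₁ : w ⬝ᵥ b₁ = 0)
    (hw₂ : w ⬝ᵥ b₂ = 0) :
    (1 ⊗ₖ pauliDot w) * steeringOp a₁ a₂ b₁ b₂ = -(steeringOp a₁ a₂ b₁ b₂ * (1 ⊗ₖ pauliDot w)) := by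
  simp only [steeringOp, mul_smul_comm, smul_mul_assoc, ← smul_neg, mul_add, add_mul,
    ← mul_kronecker_mul, one_mul, mul_one, pauliDot_anticomm hw₁, pauliDot_anticomm hw₂,
    kronecker_neg, neg_add]

lemma neg_mem_spectrum_steeringOp (hb₁ : b₁ ⬝ᵥ b₁ = 1) (hb₂ : b₂ ⬝ᵥ b₂ = 1)
    (hb₁₂ : b₁ ⬝ᵥ b₂ = 0) {μ : ℂ} (hμ : μ ∈ spectrum ℂ (steeringOp a₁ a₂ b₁ b₂)) :
    -μ ∈ spectrum ℂ (steeringOp a₁ a₂ b₁ b₂) := by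
  refine spectrum.neg_mem_of_mul_eq_neg_mul (u := 1 ⊗ₖ pauliDot (b₁ ⨯₃ b₂)) ?_ ?_ hμ
  · rw [← mul_kronecker_mul, one_mul, pauliDot_mul_self, cross_dot_cross_self_eq_one hb₁ hb₂ hb₁₂,
      ofReal_one, one_smul, one_kronecker_one]
  · exact one_kronecker_pauliDot_mul_steeringOp (by rw [dotProduct_comm, dot_self_cross])
      (by rw [dotProduct_comm, dot_cross_self])

end steeringOp

/-- For unit vectors `u₁, u₂` and orthonormal `v₁, v₂`, the largest eigenvalue (in magnitude) of
the steering operator `O` is `√(1 + ‖u₁ × u₂‖)`: it lies in the spectrum of `O`, and every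
eigenvalue `μ` of `O` satisfies `|μ| ≤ √(1 + ‖u₁ × u₂‖)`. -/
theorem steering_op_largest_eigenvalue (u₁ u₂ v₁ v₂ : Fin 3 → ℝ)
    (hu₁ : u₁ ⬝ᵥ u₁ = 1) (hu₂ : u₂ ⬝ᵥ u₂ = 1) (hv₁ : v₁ ⬝ᵥ v₁ = 1) (hv₂ : v₂ ⬝ᵥ v₂ = 1)
    (hv₁₂ : v₁ ⬝ᵥ v₂ = 0)
    (O : Matrix (Fin 2 × Fin 2) (Fin 2 × Fin 2) ℂ)
    (hO : O = ((1 / Real.sqrt 2 : ℝ) : ℂ) •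
      (pauliDot u₁ ⊗ₖ pauliDot v₁ + pauliDot u₂ ⊗ₖ pauliDot v₂)) :
    ((Real.sqrt (1 + enorm3 (crossProduct u₁ u₂)) : ℝ) : ℂ) ∈ spectrum ℂ O ∧
      ∀ μ : ℂ, μ ∈ spectrum ℂ O →
        ‖μ‖ ≤ Real.sqrt (1 + enorm3 (crossProduct u₁ u₂)) := by
  obtain rfl : O = steeringOp u₁ u₂ v₁ v₂ := hO
  set n := enorm3 (u₁ ⨯₃ u₂)
  have hn : 0 ≤ n := Real.sqrt_nonneg _
  set M := pauliDot (u₁ ⨯₃ u₂) ⊗ₖ pauliDot (v₁ ⨯₃ v₂)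
  have hMM : M * M = ((n : ℂ) * n) • 1 := by
    rw [kronecker_pauliDot_mul_self, cross_dot_cross_self_eq_one hv₁ hv₂ hv₁₂, mul_one,
      ← ofReal_mul, enorm3_mul_self]
  have hOO := steeringOp_sq hu₁ hu₂ hv₁ hv₂ hv₁₂
  constructor
  · refine spectrum.mem_of_sq_mem_spectrum_sq (fun μ ↦ neg_mem_spectrum_steeringOp hv₁ hv₂ hv₁₂) ?_
    have hsqrt : ((√(1 + n) : ℝ) : ℂ) ^ 2 = 1 + n := by
      exact_mod_cast Real.sq_sqrt (by linarith : 0 ≤ 1 + n)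
    rw [hsqrt, hOO, spectrum.mem_one_sub_iff, sub_add_cancel_left]
    exact Matrix.neg_mem_spectrum_of_mul_self_eq_of_trace_eq_zero hMM (trace_kronecker_pauliDot _ _)
  · intro μ hμ
    have h := spectrum.pow_mem_pow _ 2 hμ
    rw [hOO, spectrum.mem_one_sub_iff] at h
    refine Complex.norm_le_sqrt_of_norm_one_sub_sq_le ?_
    rcases spectrum.eq_or_eq_neg_of_mul_self_eq hMM h with h | h <;>
      simp [h, abs_of_nonneg hn]
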